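/- Let X be a locally finite preordered set, R a commutative ring, and θ a commuting map on I(X,R). For all f ∈ I(X,R) and all x < y: θ(f)(x,y) = θ(f|ₓʸ)(x,y), where f|ₓʸ is the restriction of f to the interval [x,y]. -/

import Mathlib

/-!
Write `f = g + f|ₓʸ`, so that `g` vanishes at every pair `(x,z)` and `(z,y)` with `z ∈ [x,y]`.
Polarizing `[θ(h),h] = 0` at `h = g + e_{xx}` gives `[θ(g), e_{xx}] = [g, θ(e_{xx})]`; at `(x,y)`
the right side vanishes because of where `g` vanishes, and the left side is `-θ(g)(x,y)` since `x ≠ y`.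
-/

variable {X R : Type*} [Preorder X] [LocallyFiniteOrder X] [DecidableEq X] [CommRing R]

/-- Membership in the incidence algebra `I(X,R)`: supported on pairs `x ≤ y`. -/
def IsInc (f : X → X → R) : Prop := ∀ x y : X, ¬ x ≤ y → f x y = 0

/-- The convolution product of the incidence algebra. -/
def conv (f g : X → X → R) : X → X → R :=
  fun x y => ∑ z ∈ Finset.Icc x y, f x z * g z y

/-- The restriction `f|ₓʸ` of `f` to the interval `[x,y]`. -/
def restrict [DecidableRel (α := X) (· ≤ ·)] (f : X → X → R) (x y : X) : X → X → R :=
  fun u v => if x ≤ u ∧ u ≤ v ∧ v ≤ y then f u v else 0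

/-- A commuting map on the incidence algebra. -/
structure IsCommMap (θ : (X → X → R) → X → X → R) : Prop where
  map_inc : ∀ f, IsInc f → IsInc (θ f)
  map_add : ∀ f g, IsInc f → IsInc g → θ (f + g) = θ f + θ g
  map_smul : ∀ (r : R) (f), IsInc f → θ (r • f) = r • θ f
  comm : ∀ f, IsInc f → conv (θ f) f = conv f (θ f)

omit [LocallyFiniteOrder X] [DecidableEq X] in
lemma IsInc.add {f g : X → X → R} (hf : IsInc f) (hg : IsInc g) : IsInc (f + g) :=
  fun u v h => by simp [hf u v h, hg u v h]

omit [LocallyFiniteOrder X] [DecidableEq X] in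
lemma IsInc.sub {f g : X → X → R} (hf : IsInc f) (hg : IsInc g) : IsInc (f - g) :=
  fun u v h => by simp [hf u v h, hg u v h]

omit [LocallyFiniteOrder X] [DecidableEq X] in
lemma isInc_restrict [DecidableRel (α := X) (· ≤ ·)] (f : X → X → R) (x y : X) :
    IsInc (restrict f x y) :=
  fun _ _ h => if_neg fun hu => h hu.2.1

omit [DecidableEq X] in
lemma conv_add_left (f g h : X → X → R) : conv (f + g) h = conv f h + conv g h := by
  ext x y; simp only [conv, Pi.add_apply, add_mul, Finset.sum_add_distrib]

omit [DecidableEq X] in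
lemma conv_add_right (f g h : X → X → R) : conv f (g + h) = conv f g + conv f h := by
  ext x y; simp only [conv, Pi.add_apply, mul_add, Finset.sum_add_distrib]

def diagIdem (x : X) : X → X → R := fun u v => if u = x ∧ v = x then 1 else 0

omit [LocallyFiniteOrder X] in
lemma isInc_diagIdem (x : X) : IsInc (diagIdem (R := R) x) :=
  fun _ _ h => if_neg fun ⟨hu, hv⟩ => h (hu ▸ hv ▸ le_rfl)

lemma conv_diagIdem_left_apply (h : X → X → R) {x y : X} (hxy : x ≤ y) :
    conv (diagIdem x) h x y = h x y := by
  rw [conv, Finset.sum_eq_single_of_mem x (Finset.mem_Icc.mpr ⟨le_rfl, hxy⟩)]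
  · simp [diagIdem]
  · intro z _ hzx
    simp [diagIdem, hzx]

lemma conv_diagIdem_right_apply (h : X → X → R) {x y : X} (hne : x ≠ y) :
    conv h (diagIdem x) x y = 0 :=
  Finset.sum_eq_zero fun _ _ => by simp [diagIdem, hne.symm]

namespace IsCommMap

variable {θ : (X → X → R) → X → X → R}

omit [DecidableEq X] in
lemma conv_add_conv_eq (hθ : IsCommMap θ) {f g : X → X → R} (hf : IsInc f) (hg : IsInc g) :
    conv (θ f) g + conv (θ g) f = conv f (θ g) + conv g (θ f) := by
  have hfg := hθ.comm (f + g) (hf.add hg)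
  simp only [hθ.map_add f g hf hg, conv_add_left, conv_add_right] at hfg
  linear_combination hfg - hθ.comm f hf - hθ.comm g hg

lemma apply_eq_zero_of_vanishing_on_Icc (hθ : IsCommMap θ) {g : X → X → R} (hg : IsInc g)
    {x y : X} (hxy : x ≤ y) (hne : x ≠ y)
    (hgx : ∀ z ∈ Finset.Icc x y, g x z = 0) (hgy : ∀ z ∈ Finset.Icc x y, g z y = 0) :
    θ g x y = 0 := by
  have key := congrFun₂ (hθ.conv_add_conv_eq hg (isInc_diagIdem (R := R) x)) x y
  have hθe_g : conv (θ (diagIdem x)) g x y = 0 :=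
    Finset.sum_eq_zero fun z hz => by rw [hgy z hz, mul_zero]
  have hg_θe : conv g (θ (diagIdem x)) x y = 0 :=
    Finset.sum_eq_zero fun z hz => by rw [hgx z hz, zero_mul]
  simp only [Pi.add_apply, hθe_g, hg_θe, conv_diagIdem_right_apply _ hne,
    conv_diagIdem_left_apply _ hxy] at key
  linear_combination -key

end IsCommMap

/-- for a commuting map `θ` on `I(X,R)` with `X` locally finite and `x < y`,
`θ(f)(x,y) = θ(f|ₓʸ)(x,y)`. -/
theorem theta_restrict [DecidableRel (α := X) (· ≤ ·)]
    (θ : (X → X → R) → X → X → R) (hθ : IsCommMap θ) :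
    ∀ f, IsInc f → ∀ x y : X, x ≤ y → x ≠ y → θ f x y = θ (restrict f x y) x y := by
  intro f hf x y hxy hne
  have hr := isInc_restrict f x y
  have hsplit : θ f = θ (f - restrict f x y) + θ (restrict f x y) := by
    rw [← hθ.map_add _ _ (hf.sub hr) hr, sub_add_cancel]
  have hzero : θ (f - restrict f x y) x y = 0 := by
    refine hθ.apply_eq_zero_of_vanishing_on_Icc (hf.sub hr) hxy hne ?_ ?_ <;>
    · intro z hz
      rw [Finset.mem_Icc] at hz
      simp [restrict, hz.1, hz.2]
  rw [hsplit, Pi.add_apply, Pi.add_apply, hzero, zero_add]
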